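/- arXiv:1308.5467 — 5 statements merged into one kernel-verified Lean document; each statement's English description precedes it below -/
import Mathlib

section
/- Given an (M+1)-step Lanczos factorization A V = V T + f e_Mᵀ of the real symmetric n×n matrix A (with T tridiagonal), one has A^j (V e_0) = V (T^j e_0) for every integer j with 0 ≤ j ≤ M. -/
/-! Iterating `A V = V T + E` gives `A^j V x = V T^j x` as long as the defect `E` kills each
`T^i x` with `i < j`. For the Lanczos defect `E = f e_Mᵀ` this asks that the last entry of
`T^i e_0` vanish; since `T` has no entries below its subdiagonal, `T^i e_0` is supported on the
first `i + 1` coordinates, so this holds for `i < M`. -/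

open Matrix

theorem Matrix.pow_mulVec_mulVec_of_mul_eq_add {R m n : Type*} [Semiring R] [Fintype m]
    [Fintype n] [DecidableEq m] [DecidableEq n] {A : Matrix m m R} {V : Matrix m n R}
    {T : Matrix n n R} {E : Matrix m n R} {x : n → R} (hAV : A * V = V * T + E) {j : ℕ}
    (hE : ∀ i < j, E *ᵥ (T ^ i *ᵥ x) = 0) :
    A ^ j *ᵥ (V *ᵥ x) = V *ᵥ (T ^ j *ᵥ x) := by
  induction j with
  | zero => simp only [pow_zero, one_mulVec]
  | succ j ih =>
    calc A ^ (j + 1) *ᵥ (V *ᵥ x)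
        = (A * V) *ᵥ (T ^ j *ᵥ x) := by
          rw [pow_succ', ← mulVec_mulVec, ih fun i hi => hE i (by omega), mulVec_mulVec]
      _ = V *ᵥ (T ^ (j + 1) *ᵥ x) := by
          rw [hAV, add_mulVec, hE j j.lt_succ_self, add_zero, mulVec_mulVec, mulVec_mulVec,
            Matrix.mul_assoc, ← pow_succ']

def Matrix.IsUpperHessenberg {R : Type*} [Zero R] {k : ℕ} (T : Matrix (Fin k) (Fin k) R) : Prop :=
  ∀ i j : Fin k, (j : ℕ) + 1 < i → T i j = 0

theorem Matrix.IsUpperHessenberg.mulVec_apply_eq_zero {R : Type*} [NonUnitalNonAssocSemiring R]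
    {k s : ℕ} {T : Matrix (Fin k) (Fin k) R} (hT : T.IsUpperHessenberg) {v : Fin k → R}
    (hv : ∀ i : Fin k, s < i → v i = 0) {i : Fin k} (hi : s + 1 < i) : (T *ᵥ v) i = 0 := by
  rw [mulVec, dotProduct]
  refine Finset.sum_eq_zero fun j _ => ?_
  rcases lt_or_ge s j with hj | hj
  · rw [hv j hj, mul_zero]
  · rw [hT i j (by omega), zero_mul]

theorem Matrix.IsUpperHessenberg.pow_mulVec_single_zero_apply_eq_zero {R : Type*} [Semiring R]
    {k : ℕ} {T : Matrix (Fin (k + 1)) (Fin (k + 1)) R} (hT : T.IsUpperHessenberg) (j : ℕ)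
    {i : Fin (k + 1)} (hi : j < i) : (T ^ j *ᵥ Pi.single 0 1) i = 0 := by
  induction j generalizing i with
  | zero => simp [Fin.ext_iff, hi.ne']
  | succ j ih =>
    rw [pow_succ', ← mulVec_mulVec]
    exact hT.mulVec_apply_eq_zero (fun i' hi' => ih hi') hi

theorem lanczos_krylov_powers_general
    (n M : ℕ)
    (A : Matrix (Fin n) (Fin n) ℝ)
    (V : Matrix (Fin n) (Fin (M + 1)) ℝ)
    (T : Matrix (Fin (M + 1)) (Fin (M + 1)) ℝ)
    (f : Fin n → ℝ)
    (htri : ∀ i j : Fin (M + 1), 1 < |(i : ℤ) - (j : ℤ)| → T i j = 0)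
    (hfac : A * V = V * T + Matrix.vecMulVec f (Pi.single (Fin.last M) 1)) :
    ∀ j : ℕ, j ≤ M →
      (A ^ j).mulVec (V.mulVec (Pi.single 0 1))
        = V.mulVec ((T ^ j).mulVec (Pi.single 0 1)) := by
  have hHess : T.IsUpperHessenberg := fun i j hij =>
    htri i j (lt_abs.mpr (Or.inl (by omega)))
  intro j hj
  refine pow_mulVec_mulVec_of_mul_eq_add hfac fun i hi => ?_
  rw [vecMulVec_mulVec, single_one_dotProduct,
    hHess.pow_mulVec_single_zero_apply_eq_zero i (by rw [Fin.val_last]; omega),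
    MulOpposite.op_zero, zero_smul]

/-- Given an `(M+1)`-step Lanczos factorization `A V = V T + f e_Mᵀ` of a real
symmetric `n×n` matrix `A` (with `VᵀV = I`, `T` symmetric tridiagonal, `Vᵀ f = 0`),
one has `A^j (V e_0) = V (T^j e_0)` for every `0 ≤ j ≤ M`. -/
theorem lanczos_krylov_powers
    (n M : ℕ)
    (A : Matrix (Fin n) (Fin n) ℝ) (hA : A.IsSymm)
    (V : Matrix (Fin n) (Fin (M + 1)) ℝ)
    (T : Matrix (Fin (M + 1)) (Fin (M + 1)) ℝ)
    (f : Fin n → ℝ)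
    (hV : Vᵀ * V = 1)
    (hT : T.IsSymm)
    (htri : ∀ i j : Fin (M + 1), 1 < |(i : ℤ) - (j : ℤ)| → T i j = 0)
    (hVf : Vᵀ.mulVec f = 0)
    (hfac : A * V = V * T + Matrix.vecMulVec f (Pi.single (Fin.last M) 1)) :
    ∀ j : ℕ, j ≤ M →
      (A ^ j).mulVec (V.mulVec (Pi.single 0 1))
        = V.mulVec ((T ^ j).mulVec (Pi.single 0 1)) :=
  lanczos_krylov_powers_general n M A V T f htri hfac
end

section
/- Given an (M+1)-step Lanczos factorization A V = V T + f e_Mᵀ of the real symmetric n×n matrix A, with starting vector v_0 = V e_0, the Lanczos quadrature is exact for polynomials of degree up to 2M+1: for every real polynomial p with deg p ≤ 2M+1, one has v_0ᵀ p(A) v_0 = e_0ᵀ p(T) e_0. -/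
/-!
Since `T` is tridiagonal, `T ^ k e₀` is supported on the first `k + 1` coordinates, so it has no
component along `e_M` for `k < M`, and the factorization gives `A ^ k v₀ = V T ^ k e₀` for `k ≤ M`;
one further step adds only a multiple of `f`. Writing `j ≤ 2M + 1` as `a + b` with `a ≤ M` and
`b ≤ M + 1`, symmetry of `A` gives `v₀ᵀ A ^ j v₀ = (A ^ a v₀)ᵀ (A ^ b v₀)`, and since
`Vᵀ V = 1` and `Vᵀ f = 0` this equals `(T ^ a e₀)ᵀ (T ^ b e₀) = e₀ᵀ T ^ j e₀`. The moments of
degree `≤ 2M + 1` thus agree, and the claim follows by linearity in `p`.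
-/

open Matrix

namespace Matrix

variable {R : Type*} [CommRing R] {ι κ : Type*} [Fintype ι] [Fintype κ]

section Powers

variable [DecidableEq ι] [DecidableEq κ]

theorem dotProduct_aeval_mulVec_eq_of_pow {A : Matrix ι ι R} {B : Matrix κ κ R}
    {v : ι → R} {w : κ → R} {d : ℕ}
    (h : ∀ j ≤ d, v ⬝ᵥ (A ^ j *ᵥ v) = w ⬝ᵥ (B ^ j *ᵥ w))
    {p : Polynomial R} (hp : p.natDegree ≤ d) :
    v ⬝ᵥ (Polynomial.aeval A p *ᵥ v) = w ⬝ᵥ (Polynomial.aeval B p *ᵥ w) := by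
  have hlt : p.natDegree < d + 1 := Nat.lt_succ_of_le hp
  simp only [Polynomial.aeval_eq_sum_range' hlt, sum_mulVec, dotProduct_sum, smul_mulVec,
    dotProduct_smul]
  exact Finset.sum_congr rfl fun j hj =>
    congrArg (p.coeff j • ·) (h j (Nat.le_of_lt_succ (Finset.mem_range.mp hj)))

theorem IsSymm.pow_mulVec_dotProduct_pow_mulVec {B : Matrix ι ι R} (hB : B.IsSymm)
    (a b : ℕ) (x y : ι → R) :
    (B ^ a *ᵥ x) ⬝ᵥ (B ^ b *ᵥ y) = x ⬝ᵥ (B ^ (a + b) *ᵥ y) := by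
  rw [dotProduct_comm, dotProduct_mulVec, ← mulVec_transpose, transpose_pow, hB, mulVec_mulVec,
    ← pow_add, dotProduct_comm, add_comm]

theorem pow_mulVec_single_zero_apply_eq_zero {m : ℕ} {T : Matrix (Fin (m + 1)) (Fin (m + 1)) R}
    (hT : ∀ i j : Fin (m + 1), (j : ℕ) + 1 < i → T i j = 0) {k : ℕ} {i : Fin (m + 1)}
    (hki : k < i) : (T ^ k *ᵥ Pi.single 0 (1 : R)) i = 0 := by
  induction k generalizing i with
  | zero =>
    have hi : i ≠ 0 := Fin.pos_iff_ne_zero.mp hki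
    simp [hi]
  | succ k ih =>
    rw [pow_succ', ← mulVec_mulVec, mulVec, dotProduct]
    refine Finset.sum_eq_zero fun j _ => ?_
    by_cases hkj : k < j
    · rw [ih hkj, mul_zero]
    · rw [hT i j (by omega), zero_mul]

end Powers

section Lanczos

variable {A : Matrix ι ι R} {V : Matrix ι κ R} {T : Matrix κ κ R} {f : ι → R} {e : κ → R}

theorem lanczos_mulVec_mulVec (hfac : A * V = V * T + vecMulVec f e) (x : κ → R) :
    A *ᵥ (V *ᵥ x) = V *ᵥ (T *ᵥ x) + (e ⬝ᵥ x) • f := by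
  rw [mulVec_mulVec, hfac, add_mulVec, ← mulVec_mulVec, vecMulVec_mulVec, op_smul_eq_smul]

variable [DecidableEq κ]

theorem mulVec_dotProduct_mulVec_add_smul (hV : Vᵀ * V = 1) (hVf : Vᵀ *ᵥ f = 0)
    (x y : κ → R) (c : R) : (V *ᵥ x) ⬝ᵥ (V *ᵥ y + c • f) = x ⬝ᵥ y := by
  rw [dotProduct_comm, dotProduct_mulVec, ← mulVec_transpose, mulVec_add, mulVec_mulVec, hV,
    one_mulVec, mulVec_smul, hVf, smul_zero, add_zero, dotProduct_comm]

variable [DecidableEq ι]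

theorem lanczos_pow_mulVec_mulVec (hfac : A * V = V * T + vecMulVec f e)
    {x : κ → R} {k : ℕ} (hx : ∀ j < k, e ⬝ᵥ (T ^ j *ᵥ x) = 0) :
    A ^ k *ᵥ (V *ᵥ x) = V *ᵥ (T ^ k *ᵥ x) := by
  induction k with
  | zero => simp
  | succ k ih =>
    rw [pow_succ', ← mulVec_mulVec, ih fun j hj => hx j (by omega), lanczos_mulVec_mulVec hfac,
      hx k k.lt_succ_self, zero_smul, add_zero, mulVec_mulVec x T, ← pow_succ']

theorem lanczos_pow_succ_mulVec_mulVec (hfac : A * V = V * T + vecMulVec f e)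
    {x : κ → R} {k : ℕ} (hx : ∀ j < k, e ⬝ᵥ (T ^ j *ᵥ x) = 0) :
    A ^ (k + 1) *ᵥ (V *ᵥ x) = V *ᵥ (T ^ (k + 1) *ᵥ x) + (e ⬝ᵥ (T ^ k *ᵥ x)) • f := by
  rw [pow_succ', ← mulVec_mulVec, lanczos_pow_mulVec_mulVec hfac hx, lanczos_mulVec_mulVec hfac,
    mulVec_mulVec x T, ← pow_succ']

theorem lanczos_mulVec_dotProduct_pow_mulVec (hA : A.IsSymm) (hT : T.IsSymm) (hV : Vᵀ * V = 1)
    (hVf : Vᵀ *ᵥ f = 0) (hfac : A * V = V * T + vecMulVec f e) {x : κ → R} {M : ℕ}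
    (hx : ∀ j < M, e ⬝ᵥ (T ^ j *ᵥ x) = 0) {j : ℕ} (hj : j ≤ 2 * M + 1) :
    (V *ᵥ x) ⬝ᵥ (A ^ j *ᵥ (V *ᵥ x)) = x ⬝ᵥ (T ^ j *ᵥ x) := by
  obtain ⟨a, b, rfl, ha, hb⟩ : ∃ a b, j = a + b ∧ a ≤ M ∧ b ≤ M + 1 :=
    ⟨min j M, j - min j M, by omega, by omega, by omega⟩
  obtain ⟨c, hc⟩ : ∃ c : R, A ^ b *ᵥ (V *ᵥ x) = V *ᵥ (T ^ b *ᵥ x) + c • f := by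
    rcases Nat.lt_or_ge b (M + 1) with hbM | hbM
    · refine ⟨0, ?_⟩
      rw [lanczos_pow_mulVec_mulVec hfac fun i hi => hx i (by omega), zero_smul, add_zero]
    · obtain rfl : b = M + 1 := by omega
      exact ⟨_, lanczos_pow_succ_mulVec_mulVec hfac hx⟩
  calc (V *ᵥ x) ⬝ᵥ (A ^ (a + b) *ᵥ (V *ᵥ x))
      = (A ^ a *ᵥ (V *ᵥ x)) ⬝ᵥ (A ^ b *ᵥ (V *ᵥ x)) :=
        (hA.pow_mulVec_dotProduct_pow_mulVec a b _ _).symm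
    _ = (V *ᵥ (T ^ a *ᵥ x)) ⬝ᵥ (V *ᵥ (T ^ b *ᵥ x) + c • f) := by
        rw [lanczos_pow_mulVec_mulVec hfac fun i hi => hx i (by omega), hc]
    _ = (T ^ a *ᵥ x) ⬝ᵥ (T ^ b *ᵥ x) := mulVec_dotProduct_mulVec_add_smul hV hVf _ _ _
    _ = x ⬝ᵥ (T ^ (a + b) *ᵥ x) := hT.pow_mulVec_dotProduct_pow_mulVec a b _ _

end Lanczos

end Matrix

/-- Given an `(M+1)`-step Lanczos factorization `A V = V T + f e_Mᵀ` of a real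
symmetric matrix `A`, with starting vector `v₀ = V e₀`, the Lanczos quadrature is
exact for polynomials of degree up to `2M+1`:
`v₀ᵀ p(A) v₀ = e₀ᵀ p(T) e₀` for every real polynomial `p` with `deg p ≤ 2M+1`. -/
theorem lanczos_quadrature_exact
    (n M : ℕ)
    (A : Matrix (Fin n) (Fin n) ℝ) (hA : A.IsSymm)
    (V : Matrix (Fin n) (Fin (M + 1)) ℝ)
    (T : Matrix (Fin (M + 1)) (Fin (M + 1)) ℝ)
    (f : Fin n → ℝ)
    (hV : Vᵀ * V = 1)
    (hT : T.IsSymm)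
    (htri : ∀ i j : Fin (M + 1), 1 < |(i : ℤ) - (j : ℤ)| → T i j = 0)
    (hVf : Vᵀ.mulVec f = 0)
    (hfac : A * V = V * T + Matrix.vecMulVec f (Pi.single (Fin.last M) 1))
    (v₀ : Fin n → ℝ) (hv₀ : v₀ = V.mulVec (Pi.single 0 1)) :
    ∀ p : Polynomial ℝ, p.natDegree ≤ 2 * M + 1 →
      v₀ ⬝ᵥ (Polynomial.aeval A p).mulVec v₀
        = (Pi.single 0 1 : Fin (M + 1) → ℝ) ⬝ᵥ
            (Polynomial.aeval T p).mulVec (Pi.single 0 1) := by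
  intro p hp
  have hHess : ∀ i j : Fin (M + 1), (j : ℕ) + 1 < i → T i j = 0 := fun i j hij =>
    htri i j ((by omega : (1 : ℤ) < i - j).trans_le (le_abs_self _))
  have hlast : ∀ j < M, Pi.single (Fin.last M) 1 ⬝ᵥ (T ^ j *ᵥ Pi.single 0 1) = 0 :=
    fun j hj => by
      rw [single_one_dotProduct]
      exact pow_mulVec_single_zero_apply_eq_zero hHess (by simpa using hj)
  subst hv₀
  exact dotProduct_aeval_mulVec_eq_of_pow
    (fun j hj => lanczos_mulVec_dotProduct_pow_mulVec hA hT hV hVf hfac hlast hj) hp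
end

section
/- Let A be an n×n real symmetric matrix with spectral decomposition A = Σ_{j=1}^n λ_j u_j u_jᵀ, where u_1, …, u_n is an orthonormal basis of eigenvectors. Given an (M+1)-step Lanczos factorization A V = V T + f e_Mᵀ of A with starting vector v_0 = V e_0, write β_j = u_jᵀ v_0. Let T = Σ_{k=0}^{M} θ_k y_k y_kᵀ be a spectral decomposition of T with orthonormal eigenvectors y_0, …, y_M, and let τ_k = e_0ᵀ y_k be the first entry of y_k. Then for every real polynomial q of degree at most 2M+1, Σ_{j=1}^n β_j² q(λ_j) = Σ_{k=0}^M τ_k² q(θ_k). -/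
/-!
Both sides are linear in `q`, so it suffices to match the moments of order `k ≤ 2M + 1`; by the
two spectral decompositions these are `v₀ᵀ Aᵏ v₀` and `e₀ᵀ Tᵏ e₀`. As `T` is tridiagonal,
`Tᵃ e₀` is supported on the first `a + 1` entries, so the residual `f e_Mᵀ` is not seen by
`Tᵃ e₀` for `a < M` and hence `Aᵃ v₀ = V Tᵃ e₀` for `a ≤ M`. Writing `k = a + ε + b` with
`a, b ≤ M` and `ε ≤ 1`, symmetry gives `v₀ᵀ Aᵏ v₀ = (Tᵃ e₀)ᵀ (Vᵀ Aᵉ V) (Tᵇ e₀)`, and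
`Vᵀ Aᵉ V = Tᵉ` because `VᵀV = 1` and `Vᵀf = 0`.
-/

open Matrix Polynomial

theorem sum_mul_eval_eq_sum_coeff_mul {R ι : Type*} [CommSemiring R] [Fintype ι] (w x : ι → R)
    {q : R[X]} {N : ℕ} (hq : q.natDegree < N) :
    ∑ i, w i * q.eval (x i) = ∑ m ∈ Finset.range N, q.coeff m * ∑ i, w i * x i ^ m := by
  simp_rw [eval_eq_sum_range' hq, Finset.mul_sum]
  rw [Finset.sum_comm]
  exact Finset.sum_congr rfl fun _ _ => Finset.sum_congr rfl fun _ _ => mul_left_comm _ _ _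

theorem sum_mul_eval_eq_of_sum_mul_pow_eq {R ι κ : Type*} [CommSemiring R] [Fintype ι]
    [Fintype κ] {w x : ι → R} {w' x' : κ → R} {N : ℕ}
    (h : ∀ m ≤ N, ∑ i, w i * x i ^ m = ∑ k, w' k * x' k ^ m) {q : R[X]}
    (hq : q.natDegree ≤ N) : ∑ i, w i * q.eval (x i) = ∑ k, w' k * q.eval (x' k) := by
  have hq' : q.natDegree < N + 1 := Nat.lt_succ_of_le hq
  rw [sum_mul_eval_eq_sum_coeff_mul _ _ hq', sum_mul_eval_eq_sum_coeff_mul _ _ hq']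
  exact Finset.sum_congr rfl fun m hm => by rw [h m (Finset.mem_range_succ_iff.mp hm)]

section Spectral

variable {R m ι : Type*} [CommRing R] [Fintype m]

theorem mulVec_eq_smul_of_eq_sum_vecMulVec [Fintype ι] [DecidableEq ι] {A : Matrix m m R}
    {lam : ι → R} {u : ι → m → R} (hu : ∀ i j, u i ⬝ᵥ u j = if i = j then 1 else 0)
    (hA : A = ∑ j, lam j • vecMulVec (u j) (u j)) (i : ι) : A *ᵥ u i = lam i • u i := by
  simp [hA, sum_mulVec, smul_mulVec, vecMulVec_mulVec, hu]

theorem pow_mulVec_eq_pow_smul {A : Matrix m m R} [DecidableEq m] {c : R} {v : m → R}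
    (hv : A *ᵥ v = c • v) (k : ℕ) : (A ^ k) *ᵥ v = c ^ k • v := by
  induction k with
  | zero => simp
  | succ k ih => rw [pow_succ', ← mulVec_mulVec, ih, mulVec_smul, hv, smul_smul, pow_succ]

theorem sum_dotProduct_smul_eq_self [DecidableEq m] {u : m → m → R}
    (hu : ∀ i j, u i ⬝ᵥ u j = if i = j then 1 else 0) (x : m → R) :
    ∑ j, (u j ⬝ᵥ x) • u j = x := by
  have hrows : of u * (of u)ᵀ = 1 := by
    ext i j
    simpa [mul_apply, dotProduct, one_apply] using hu i j
  have hcols : (of u)ᵀ * of u = 1 := mul_eq_one_comm.mp hrows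
  calc ∑ j, (u j ⬝ᵥ x) • u j = (of u)ᵀ *ᵥ (of u *ᵥ x) := by
        rw [mulVec_transpose, vecMul_eq_sum]; rfl
    _ = x := by rw [mulVec_mulVec, hcols, one_mulVec]

theorem dotProduct_pow_mulVec_eq_sum [DecidableEq m] {A : Matrix m m R} {lam : m → R}
    {u : m → m → R} (hu : ∀ i j, u i ⬝ᵥ u j = if i = j then 1 else 0)
    (hA : A = ∑ j, lam j • vecMulVec (u j) (u j)) (x : m → R) (k : ℕ) :
    x ⬝ᵥ (A ^ k) *ᵥ x = ∑ j, (u j ⬝ᵥ x) ^ 2 * lam j ^ k := by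
  calc x ⬝ᵥ (A ^ k) *ᵥ x = x ⬝ᵥ (A ^ k) *ᵥ ∑ j, (u j ⬝ᵥ x) • u j := by
        rw [sum_dotProduct_smul_eq_self hu]
    _ = ∑ j, (u j ⬝ᵥ x) ^ 2 * lam j ^ k := by
        simp only [mulVec_sum, mulVec_smul, dotProduct_sum, dotProduct_smul, smul_eq_mul,
          pow_mulVec_eq_pow_smul (mulVec_eq_smul_of_eq_sum_vecMulVec hu hA _)]
        exact Finset.sum_congr rfl fun j _ => by rw [dotProduct_comm x]; ring

end Spectral

section Lanczos

variable {R m n : Type*} [CommRing R] [Fintype m] [Fintype n]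

theorem pow_mulVec_single_eq_zero {N : ℕ} {T : Matrix (Fin N) (Fin N) R}
    (hT : ∀ i j : Fin N, (j : ℕ) + 1 < i → T i j = 0)
    (j : Fin N) (c : R) (k : ℕ) (i : Fin N) (hi : (j : ℕ) + k < i) :
    ((T ^ k) *ᵥ Pi.single j c) i = 0 := by
  induction k generalizing i with
  | zero =>
    have hij : i ≠ j := fun h => by subst h; omega
    simp [one_apply_ne hij]
  | succ k ih =>
    rw [pow_succ', ← mulVec_mulVec, mulVec, dotProduct]
    refine Finset.sum_eq_zero fun l _ => ?_
    by_cases hl : (j : ℕ) + k < l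
    · simp [ih l hl]
    · simp [hT i l (by omega)]

theorem pow_mulVec_mulVec_of_mul_eq_add_vecMulVec [DecidableEq m] [DecidableEq n]
    {A : Matrix m m R} {V : Matrix m n R} {T : Matrix n n R} {f : m → R} {g : n → R}
    (hfac : A * V = V * T + vecMulVec f g) {z : n → R} {a : ℕ}
    (hz : ∀ k < a, g ⬝ᵥ (T ^ k) *ᵥ z = 0) : (A ^ a) *ᵥ V *ᵥ z = V *ᵥ (T ^ a) *ᵥ z := by
  induction a with
  | zero => simp
  | succ a ih =>
    rw [pow_succ', ← mulVec_mulVec, ih fun k hk => hz k (by omega), mulVec_mulVec, hfac,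
      add_mulVec, vecMulVec_mulVec, hz a (by omega), pow_succ', ← mulVec_mulVec,
      mulVec_mulVec]
    simp [Matrix.mul_assoc]

theorem transpose_mul_mul_eq_of_mul_eq_add_vecMulVec [DecidableEq n] {A : Matrix m m R}
    {V : Matrix m n R} {T : Matrix n n R} {f : m → R} {g : n → R} (hV : Vᵀ * V = 1)
    (hVf : Vᵀ *ᵥ f = 0) (hfac : A * V = V * T + vecMulVec f g) : Vᵀ * A * V = T := by
  rw [Matrix.mul_assoc, hfac, Matrix.mul_add, mul_vecMulVec, hVf, ← Matrix.mul_assoc, hV]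
  simp

theorem Matrix.IsSymm.dotProduct_pow_add_mulVec [DecidableEq n] {S : Matrix n n R}
    (hS : S.IsSymm) (a c : ℕ) (x y : n → R) :
    x ⬝ᵥ (S ^ (a + c)) *ᵥ y = ((S ^ a) *ᵥ x) ⬝ᵥ (S ^ c) *ᵥ y := by
  rw [pow_add, ← mulVec_mulVec, dotProduct_mulVec, ← mulVec_transpose, (hS.pow a).eq]

theorem mulVec_dotProduct_mulVec_mulVec (V : Matrix m n R) (B : Matrix m m R) (x y : n → R) :
    (V *ᵥ x) ⬝ᵥ B *ᵥ V *ᵥ y = x ⬝ᵥ (Vᵀ * B * V) *ᵥ y := by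
  rw [Matrix.mul_assoc, ← mulVec_mulVec, ← mulVec_mulVec, dotProduct_mulVec x, vecMul_transpose]

theorem dotProduct_pow_mulVec_eq_of_lanczos [DecidableEq m] {M : ℕ} {A : Matrix m m R}
    {V : Matrix m (Fin (M + 1)) R} {T : Matrix (Fin (M + 1)) (Fin (M + 1)) R} {f : m → R}
    (hA : A.IsSymm) (hT : T.IsSymm) (hHess : ∀ i j : Fin (M + 1), (j : ℕ) + 1 < i → T i j = 0)
    (hV : Vᵀ * V = 1) (hVf : Vᵀ *ᵥ f = 0)
    (hfac : A * V = V * T + vecMulVec f (Pi.single (Fin.last M) 1)) {k : ℕ}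
    (hk : k ≤ 2 * M + 1) :
    (V *ᵥ Pi.single 0 1) ⬝ᵥ (A ^ k) *ᵥ V *ᵥ Pi.single 0 1 =
      Pi.single 0 1 ⬝ᵥ (T ^ k) *ᵥ Pi.single 0 1 := by
  have krylov : ∀ a ≤ M, (A ^ a) *ᵥ V *ᵥ Pi.single 0 1 = V *ᵥ (T ^ a) *ᵥ Pi.single 0 1 :=
    fun a ha => pow_mulVec_mulVec_of_mul_eq_add_vecMulVec hfac fun j hj => by
      rw [single_dotProduct, one_mul]
      exact pow_mulVec_single_eq_zero hHess _ _ _ _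
        (by simp only [Fin.val_last, Fin.val_zero]; omega)
  have compress : ∀ ε ≤ 1, Vᵀ * A ^ ε * V = T ^ ε := by
    intro ε hε
    interval_cases ε
    · simpa using hV
    · simpa using transpose_mul_mul_eq_of_mul_eq_add_vecMulVec hV hVf hfac
  obtain ⟨a, ε, b, ha, hε, hb, rfl⟩ : ∃ a ε b, a ≤ M ∧ ε ≤ 1 ∧ b ≤ M ∧ k = a + (ε + b) := by
    rcases le_or_gt k (2 * M) with h | h
    · exact ⟨k / 2, 0, k - k / 2, by omega, by omega, by omega, by omega⟩
    · exact ⟨M, 1, M, le_rfl, le_rfl, le_rfl, by omega⟩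
  rw [hA.dotProduct_pow_add_mulVec, hT.dotProduct_pow_add_mulVec, pow_add, pow_add,
    ← mulVec_mulVec, ← mulVec_mulVec, krylov a ha, krylov b hb,
    mulVec_dotProduct_mulVec_mulVec, compress ε hε]

end Lanczos

/-- Moment matching property of the Lanczos procedure: if `A = Σ λ_j u_j u_jᵀ` is a
spectral decomposition of the real symmetric matrix `A`, `A V = V T + f e_Mᵀ` is an
`(M+1)`-step Lanczos factorization with starting vector `v₀ = V e₀`, `β_j = u_jᵀ v₀`,
`T = Σ θ_k y_k y_kᵀ` is a spectral decomposition of `T`, and `τ_k = e₀ᵀ y_k`, then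
`Σ_j β_j² q(λ_j) = Σ_k τ_k² q(θ_k)` for all polynomials `q` of degree at most `2M+1`. -/
theorem lanczos_moment_matching
    (n M : ℕ)
    (A : Matrix (Fin n) (Fin n) ℝ) (hA : A.IsSymm)
    (lam : Fin n → ℝ) (u : Fin n → Fin n → ℝ)
    (hu : ∀ i j : Fin n, u i ⬝ᵥ u j = if i = j then (1 : ℝ) else 0)
    (hAdecomp : A = ∑ j, lam j • Matrix.vecMulVec (u j) (u j))
    (V : Matrix (Fin n) (Fin (M + 1)) ℝ)
    (T : Matrix (Fin (M + 1)) (Fin (M + 1)) ℝ)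
    (f : Fin n → ℝ)
    (hV : Vᵀ * V = 1)
    (hT : T.IsSymm)
    (htri : ∀ i j : Fin (M + 1), 1 < |(i : ℤ) - (j : ℤ)| → T i j = 0)
    (hVf : Vᵀ.mulVec f = 0)
    (hfac : A * V = V * T + Matrix.vecMulVec f (Pi.single (Fin.last M) 1))
    (v₀ : Fin n → ℝ) (hv₀ : v₀ = V.mulVec (Pi.single 0 1))
    (β : Fin n → ℝ) (hβ : ∀ j, β j = u j ⬝ᵥ v₀)
    (θ : Fin (M + 1) → ℝ) (y : Fin (M + 1) → Fin (M + 1) → ℝ)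
    (hy : ∀ k l : Fin (M + 1), y k ⬝ᵥ y l = if k = l then (1 : ℝ) else 0)
    (hTdecomp : T = ∑ k, θ k • Matrix.vecMulVec (y k) (y k))
    (τ : Fin (M + 1) → ℝ) (hτ : ∀ k, τ k = y k 0) :
    ∀ q : Polynomial ℝ, q.natDegree ≤ 2 * M + 1 →
      ∑ j, (β j) ^ 2 * q.eval (lam j) = ∑ k, (τ k) ^ 2 * q.eval (θ k) := by
  have hHess : ∀ i j : Fin (M + 1), (j : ℕ) + 1 < i → T i j = 0 :=
    fun i j h => htri i j (lt_abs.mpr (Or.inl (by omega)))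
  intro q hq
  refine sum_mul_eval_eq_of_sum_mul_pow_eq (fun k hk => ?_) hq
  calc ∑ j, β j ^ 2 * lam j ^ k = v₀ ⬝ᵥ (A ^ k) *ᵥ v₀ := by
        simp only [hβ, dotProduct_pow_mulVec_eq_sum hu hAdecomp]
    _ = Pi.single 0 1 ⬝ᵥ (T ^ k) *ᵥ Pi.single 0 1 := by
        rw [hv₀]
        exact dotProduct_pow_mulVec_eq_of_lanczos hA hT hHess hV hVf hfac hk
    _ = ∑ l, τ l ^ 2 * θ l ^ k := by
        simp only [hτ, dotProduct_pow_mulVec_eq_sum hy hTdecomp, dotProduct_single, mul_one]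
end

section
/- Given an (M+1)-step Lanczos factorization A V = V T + f e_Mᵀ of the real symmetric n×n matrix A, regard A, T, V, f, and v_0 = V e_0 as complex matrices/vectors, and let z = t + iη with t, η ∈ ℝ and η ≠ 0. Then A − zI and T − zI are invertible, and v_0ᵀ (A − zI)⁻¹ v_0 = e_0ᵀ (T − zI)⁻¹ e_0 − ( v_0ᵀ (A − zI)⁻¹ f ) ( e_Mᵀ (T − zI)⁻¹ e_0 ). -/
/-!
Subtracting `z` on both sides of the factorization gives `(A - z) V = V (T - z) + f e_Mᵀ`.
Multiplying by `(A - z)⁻¹` on the left and by `(T - z)⁻¹` on the right yields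
`V (T - z)⁻¹ = (A - z)⁻¹ V + (A - z)⁻¹ f e_Mᵀ (T - z)⁻¹`; apply this to `e₀` and pair with `v₀`,
using `v₀ᵀ V = e₀ᵀ` by orthonormality. Both shifted matrices are invertible because the spectrum
of a Hermitian matrix is real while `z` is not.
-/

open Matrix

namespace Matrix

theorem IsHermitian.isUnit_sub_smul_one {𝕜 n : Type*} [RCLike 𝕜] [Fintype n] [DecidableEq n]
    {A : Matrix n n 𝕜} (hA : A.IsHermitian) {z : 𝕜} (hz : RCLike.im z ≠ 0) :
    IsUnit (A - z • 1) := by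
  have hz : z ∉ spectrum 𝕜 A := by
    rw [hA.spectrum_eq_image_range]
    rintro ⟨x, -, rfl⟩
    simp at hz
  rw [← neg_sub, IsUnit.neg_iff, ← Algebra.algebraMap_eq_smul_one]
  exact spectrum.notMem_iff.mp hz

theorem IsSymm.isHermitian_map_ofReal {n : Type*} {A : Matrix n n ℝ} (hA : A.IsSymm) :
    (A.map Complex.ofReal).IsHermitian :=
  (isHermitian_iff_isSymm.mpr hA).map _ fun r => (Complex.conj_ofReal r).symm

section Factorization

variable {R m n : Type*} [CommRing R] [Fintype m] [Fintype n]

theorem map_mul_eq_mul_add_vecMulVec {S : Type*} [CommRing S] (φ : R →+* S)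
    {A : Matrix m m R} {T : Matrix n n R} {V : Matrix m n R} {f : m → R} {g : n → R}
    (h : A * V = V * T + vecMulVec f g) :
    A.map φ * V.map φ = V.map φ * T.map φ + vecMulVec (φ ∘ f) (φ ∘ g) := by
  rw [← Matrix.map_mul, ← Matrix.map_mul, h, Matrix.map_add φ (map_add φ)]
  congr 1
  ext
  simp [vecMulVec_apply]

theorem mulVec_vecMul_self_of_transpose_mul_self [DecidableEq n] {V : Matrix m n R}
    (hV : Vᵀ * V = 1) (x : n → R) : (V *ᵥ x) ᵥ* V = x := by
  rw [← mulVec_transpose, mulVec_mulVec, hV, one_mulVec]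

variable [DecidableEq m] [DecidableEq n]

theorem sub_smul_one_mul_eq_of_mul_eq {A : Matrix m m R} {T : Matrix n n R} {V E : Matrix m n R}
    (h : A * V = V * T + E) (z : R) : (A - z • 1) * V = V * (T - z • 1) + E := by
  rw [Matrix.sub_mul, Matrix.mul_sub, h, Matrix.smul_mul, Matrix.mul_smul, Matrix.one_mul,
    Matrix.mul_one]
  abel

theorem mul_inv_eq_inv_mul_add_of_mul_eq {P : Matrix m m R} {Q : Matrix n n R}
    {V E : Matrix m n R} (hP : IsUnit P) (hQ : IsUnit Q) (h : P * V = V * Q + E) :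
    V * Q⁻¹ = P⁻¹ * V + P⁻¹ * E * Q⁻¹ := by
  have hP' := (isUnit_iff_isUnit_det P).mp hP
  have hQ' := (isUnit_iff_isUnit_det Q).mp hQ
  calc V * Q⁻¹ = P⁻¹ * (P * V) * Q⁻¹ := by
        rw [← Matrix.mul_assoc, nonsing_inv_mul _ hP', Matrix.one_mul]
    _ = P⁻¹ * V + P⁻¹ * E * Q⁻¹ := by
        rw [h, Matrix.mul_add, Matrix.add_mul, Matrix.mul_assoc P⁻¹ (V * Q), Matrix.mul_assoc V,
          mul_nonsing_inv _ hQ', Matrix.mul_one]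

theorem dotProduct_inv_mulVec_mulVec_of_mul_eq {P : Matrix m m R} {Q : Matrix n n R}
    {V : Matrix m n R} {f : m → R} {g : n → R} (hP : IsUnit P) (hQ : IsUnit Q)
    (h : P * V = V * Q + vecMulVec f g) (u : m → R) (x : n → R) :
    u ⬝ᵥ P⁻¹ *ᵥ (V *ᵥ x) = (u ᵥ* V) ⬝ᵥ Q⁻¹ *ᵥ x - (u ⬝ᵥ P⁻¹ *ᵥ f) * (g ⬝ᵥ Q⁻¹ *ᵥ x) := by
  have hx := congrArg (· *ᵥ x) (mul_inv_eq_inv_mul_add_of_mul_eq hP hQ h)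
  simp only [add_mulVec, ← mulVec_mulVec, vecMulVec_mulVec, op_smul_eq_smul, mulVec_smul] at hx
  rw [← dotProduct_mulVec, hx, dotProduct_add, dotProduct_smul, smul_eq_mul]
  ring

end Factorization

end Matrix

theorem lanczos_resolvent_identity_general
    (n M : ℕ)
    (A : Matrix (Fin n) (Fin n) ℝ) (hA : A.IsSymm)
    (V : Matrix (Fin n) (Fin (M + 1)) ℝ)
    (T : Matrix (Fin (M + 1)) (Fin (M + 1)) ℝ)
    (f : Fin n → ℝ)
    (hV : Vᵀ * V = 1)
    (hT : T.IsSymm)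
    (hfac : A * V = V * T + Matrix.vecMulVec f (Pi.single (Fin.last M) 1))
    (t η : ℝ) (hη : η ≠ 0) (z : ℂ) (hz : z = t + η * Complex.I)
    (Ac : Matrix (Fin n) (Fin n) ℂ) (hAc : Ac = A.map (Complex.ofReal : ℝ → ℂ))
    (Tc : Matrix (Fin (M + 1)) (Fin (M + 1)) ℂ)
    (hTc : Tc = T.map (Complex.ofReal : ℝ → ℂ))
    (fc : Fin n → ℂ) (hfc : fc = fun i => (f i : ℂ))
    (v₀ : Fin n → ℂ)
    (hv₀ : v₀ = (V.map (Complex.ofReal : ℝ → ℂ)).mulVec (Pi.single 0 1)) :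
    IsUnit (Ac - z • (1 : Matrix (Fin n) (Fin n) ℂ)) ∧
    IsUnit (Tc - z • (1 : Matrix (Fin (M + 1)) (Fin (M + 1)) ℂ)) ∧
    v₀ ⬝ᵥ (Ac - z • 1)⁻¹.mulVec v₀
      = (Pi.single 0 1 : Fin (M + 1) → ℂ) ⬝ᵥ (Tc - z • 1)⁻¹.mulVec (Pi.single 0 1)
        - (v₀ ⬝ᵥ (Ac - z • 1)⁻¹.mulVec fc)
          * ((Pi.single (Fin.last M) 1 : Fin (M + 1) → ℂ) ⬝ᵥ
              (Tc - z • 1)⁻¹.mulVec (Pi.single 0 1)) := by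
  have hzim : RCLike.im z ≠ 0 := by simpa [hz] using hη
  have hUA := (hAc ▸ hA.isHermitian_map_ofReal).isUnit_sub_smul_one hzim
  have hUT := (hTc ▸ hT.isHermitian_map_ofReal).isUnit_sub_smul_one hzim
  refine ⟨hUA, hUT, ?_⟩
  set Vc := V.map Complex.ofReal
  have hVc : Vcᵀ * Vc = 1 := by
    have := congrArg (·.map Complex.ofRealHom) hV
    rw [Matrix.map_mul, transpose_map, Matrix.map_one _ (map_zero _) (map_one _)] at this
    exact this
  have hfacC : Ac * Vc = Vc * Tc + vecMulVec fc (Pi.single (Fin.last M) 1) := by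
    have hsingle : Complex.ofReal ∘ Pi.single (Fin.last M) (1 : ℝ) = Pi.single (Fin.last M) 1 := by
      ext
      simp [Pi.single_apply, apply_ite]
    rw [hAc, hTc, hfc, ← hsingle]
    exact map_mul_eq_mul_add_vecMulVec Complex.ofRealHom hfac
  rw [hv₀, dotProduct_inv_mulVec_mulVec_of_mul_eq hUA hUT (sub_smul_one_mul_eq_of_mul_eq hfacC z),
    mulVec_vecMul_self_of_transpose_mul_self hVc]

/-- Given an `(M+1)`-step Lanczos factorization `A V = V T + f e_Mᵀ` of the real
symmetric matrix `A`, regarded over `ℂ`, and `z = t + iη` with `η ≠ 0`, the matrices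
`A − zI` and `T − zI` are invertible and
`v₀ᵀ (A − zI)⁻¹ v₀ = e₀ᵀ (T − zI)⁻¹ e₀ − (v₀ᵀ (A − zI)⁻¹ f)(e_Mᵀ (T − zI)⁻¹ e₀)`. -/
theorem lanczos_resolvent_identity
    (n M : ℕ)
    (A : Matrix (Fin n) (Fin n) ℝ) (hA : A.IsSymm)
    (V : Matrix (Fin n) (Fin (M + 1)) ℝ)
    (T : Matrix (Fin (M + 1)) (Fin (M + 1)) ℝ)
    (f : Fin n → ℝ)
    (hV : Vᵀ * V = 1)
    (hT : T.IsSymm)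
    (htri : ∀ i j : Fin (M + 1), 1 < |(i : ℤ) - (j : ℤ)| → T i j = 0)
    (hVf : Vᵀ.mulVec f = 0)
    (hfac : A * V = V * T + Matrix.vecMulVec f (Pi.single (Fin.last M) 1))
    (t η : ℝ) (hη : η ≠ 0) (z : ℂ) (hz : z = t + η * Complex.I)
    (Ac : Matrix (Fin n) (Fin n) ℂ) (hAc : Ac = A.map (Complex.ofReal : ℝ → ℂ))
    (Tc : Matrix (Fin (M + 1)) (Fin (M + 1)) ℂ)
    (hTc : Tc = T.map (Complex.ofReal : ℝ → ℂ))
    (fc : Fin n → ℂ) (hfc : fc = fun i => (f i : ℂ))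
    (v₀ : Fin n → ℂ)
    (hv₀ : v₀ = (V.map (Complex.ofReal : ℝ → ℂ)).mulVec (Pi.single 0 1)) :
    IsUnit (Ac - z • (1 : Matrix (Fin n) (Fin n) ℂ)) ∧
    IsUnit (Tc - z • (1 : Matrix (Fin (M + 1)) (Fin (M + 1)) ℂ)) ∧
    v₀ ⬝ᵥ (Ac - z • 1)⁻¹.mulVec v₀
      = (Pi.single 0 1 : Fin (M + 1) → ℂ) ⬝ᵥ (Tc - z • 1)⁻¹.mulVec (Pi.single 0 1)
        - (v₀ ⬝ᵥ (Ac - z • 1)⁻¹.mulVec fc)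
          * ((Pi.single (Fin.last M) 1 : Fin (M + 1) → ℂ) ⬝ᵥ
              (Tc - z • 1)⁻¹.mulVec (Pi.single 0 1)) :=
  lanczos_resolvent_identity_general n M A hA V T f hV hT hfac t η hη z hz Ac hAc Tc hTc fc hfc v₀
    hv₀
end

section
/- For every k ∈ ℕ, σ > 0, and t ∈ ℝ, ∫_{−1}^{1} s · L_k(s) · e^{−(s−t)²/(2σ²)} ds = σ² (ψ_k(t) − ζ_k(t)) + t · γ_k(t). -/
open MeasureTheory intervalIntegral

/-- The Legendre polynomials: `L₀ = 1`, `L₁ = X`, and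
`(k+1) L_{k+1}(x) = (2k+1) x L_k(x) − k L_{k−1}(x)`. -/
noncomputable def legendre : ℕ → Polynomial ℝ
  | 0 => 1
  | 1 => Polynomial.X
  | (k + 2) =>
      ((2 * ((k : ℝ) + 1) + 1) / ((k : ℝ) + 2)) • (Polynomial.X * legendre (k + 1))
        - (((k : ℝ) + 1) / ((k : ℝ) + 2)) • legendre k

/-- `γ_k(t) = ∫_{−1}^{1} L_k(s) e^{−(s−t)²/(2σ²)} ds`. -/
noncomputable def legGamma (σ : ℝ) (k : ℕ) (t : ℝ) : ℝ :=
  ∫ s in (-1 : ℝ)..1, (legendre k).eval s * Real.exp (-(s - t) ^ 2 / (2 * σ ^ 2))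

/-- `ψ_k(t) = ∫_{−1}^{1} L_k′(s) e^{−(s−t)²/(2σ²)} ds`. -/
noncomputable def legPsi (σ : ℝ) (k : ℕ) (t : ℝ) : ℝ :=
  ∫ s in (-1 : ℝ)..1,
    ((legendre k).derivative).eval s * Real.exp (-(s - t) ^ 2 / (2 * σ ^ 2))

/-- `ζ_k(t) = e^{−(1−t)²/(2σ²)} − (−1)^k e^{−(1+t)²/(2σ²)}`. -/
noncomputable def legZeta (σ : ℝ) (k : ℕ) (t : ℝ) : ℝ :=
  Real.exp (-(1 - t) ^ 2 / (2 * σ ^ 2))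
    - (-1 : ℝ) ^ k * Real.exp (-(1 + t) ^ 2 / (2 * σ ^ 2))

/-! Since `(s - t) e^{-(s-t)²/(2σ²)} = -σ² (e^{-(s-t)²/(2σ²)})'`, writing `s = (s - t) + t`
and integrating the first part by parts against `L_k` produces `σ²ψ_k` and the boundary term
`σ²ζ_k`, which only needs `L_k(±1) = (±1)^k`. -/

theorem legendre_eval_one_and_neg_one (k : ℕ) :
    (legendre k).eval 1 = 1 ∧ (legendre k).eval (-1) = (-1) ^ k := by
  induction k using legendre.induct with
  | case1 => simp [legendre]
  | case2 => simp [legendre]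
  | case3 k ih₁ ih₀ =>
    have hk : (k : ℝ) + 2 ≠ 0 := by positivity
    simp only [legendre, Polynomial.eval_sub, Polynomial.eval_smul, Polynomial.eval_mul,
      Polynomial.eval_X, smul_eq_mul, ih₁.1, ih₁.2, ih₀.1, ih₀.2, pow_succ]
    constructor <;> field_simp <;> ring

theorem legendre_eval_one (k : ℕ) : (legendre k).eval 1 = 1 :=
  (legendre_eval_one_and_neg_one k).1

theorem legendre_eval_neg_one (k : ℕ) : (legendre k).eval (-1) = (-1) ^ k :=
  (legendre_eval_one_and_neg_one k).2

section GaussianByParts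

variable {σ : ℝ} (t : ℝ)

theorem hasDerivAt_neg_sq_mul_gaussian (hσ : σ ≠ 0) (s : ℝ) :
    HasDerivAt (fun s => -σ ^ 2 * Real.exp (-(s - t) ^ 2 / (2 * σ ^ 2)))
      ((s - t) * Real.exp (-(s - t) ^ 2 / (2 * σ ^ 2))) s := by
  have hexponent : HasDerivAt (fun s => -(s - t) ^ 2 / (2 * σ ^ 2)) (-(s - t) / σ ^ 2) s := by
    refine ((((hasDerivAt_id' s).sub_const t).pow 2).neg.div_const (2 * σ ^ 2)).congr_deriv ?_
    field_simp
    ring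
  refine (hexponent.exp.const_mul (-σ ^ 2)).congr_deriv ?_
  field_simp

theorem integral_mul_sub_mul_gaussian (hσ : σ ≠ 0) {u u' : ℝ → ℝ} {a b : ℝ}
    (hu : ∀ x ∈ Set.uIcc a b, HasDerivAt u (u' x) x) (hu' : IntervalIntegrable u' volume a b) :
    ∫ s in a..b, u s * ((s - t) * Real.exp (-(s - t) ^ 2 / (2 * σ ^ 2)))
      = σ ^ 2 * ((∫ s in a..b, u' s * Real.exp (-(s - t) ^ 2 / (2 * σ ^ 2)))
          - (u b * Real.exp (-(b - t) ^ 2 / (2 * σ ^ 2))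
            - u a * Real.exp (-(a - t) ^ 2 / (2 * σ ^ 2)))) := by
  have hv' : Continuous fun s => (s - t) * Real.exp (-(s - t) ^ 2 / (2 * σ ^ 2)) := by fun_prop
  rw [integral_mul_deriv_eq_deriv_mul hu (fun x _ => hasDerivAt_neg_sq_mul_gaussian t hσ x) hu'
    (hv'.intervalIntegrable a b)]
  have hpull : ∫ s in a..b, u' s * (-σ ^ 2 * Real.exp (-(s - t) ^ 2 / (2 * σ ^ 2)))
      = -σ ^ 2 * ∫ s in a..b, u' s * Real.exp (-(s - t) ^ 2 / (2 * σ ^ 2)) := by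
    rw [← intervalIntegral.integral_const_mul]
    congr 1 with s
    ring
  rw [hpull]
  ring

end GaussianByParts

/-- For every `k ∈ ℕ`, `σ > 0` and `t ∈ ℝ`,
`∫_{−1}^{1} s L_k(s) e^{−(s−t)²/(2σ²)} ds = σ²(ψ_k(t) − ζ_k(t)) + t γ_k(t)`. -/
theorem legendre_gaussian_first_moment (k : ℕ) (σ t : ℝ) (hσ : 0 < σ) :
    ∫ s in (-1 : ℝ)..1, s * (legendre k).eval s * Real.exp (-(s - t) ^ 2 / (2 * σ ^ 2))
      = σ ^ 2 * (legPsi σ k t - legZeta σ k t) + t * legGamma σ k t := by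
  have hsplit :
      ∫ s in (-1 : ℝ)..1, s * (legendre k).eval s * Real.exp (-(s - t) ^ 2 / (2 * σ ^ 2))
      = (∫ s in (-1 : ℝ)..1,
          (legendre k).eval s * ((s - t) * Real.exp (-(s - t) ^ 2 / (2 * σ ^ 2))))
        + t * legGamma σ k t := by
    rw [legGamma, ← intervalIntegral.integral_const_mul, ← intervalIntegral.integral_add
      (Continuous.intervalIntegrable (by fun_prop) _ _)
      (Continuous.intervalIntegrable (by fun_prop) _ _)]
    congr 1 with s
    ring
  have hparts := integral_mul_sub_mul_gaussian t hσ.ne' (a := -1) (b := 1)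
    (fun x _ => (legendre k).hasDerivAt x)
    ((legendre k).derivative.continuous.intervalIntegrable _ _)
  rw [hsplit, hparts, ← legPsi, legendre_eval_one, legendre_eval_neg_one, legZeta,
    show (-1 - t) ^ 2 = (1 + t) ^ 2 by ring]
  ring
end
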